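/- arXiv:2012.14957 — 4 statements merged into one kernel-verified Lean document; each statement's English description precedes it below -/
import Mathlib

section
/- Let E be a uniformly convex Banach space and let F be a closed linear subspace of E. Then the quotient space E/F, equipped with the quotient norm, is a uniformly convex Banach space. -/
/-!
Uniform convexity survives a small enlargement of the unit ball: rescaling by `(1 + δ)⁻¹` shows
that vectors of norm at most `1 + δ` that are `ε` apart still have `‖x + y‖ ≤ 2 - δ` for small
`δ`. Lift two unit vectors of the quotient to such representatives; since the quotient map does
not increase norms, their difference is still at least `ε` and the bound on the sum descends.
-/

theorem exists_forall_norm_le_one_add_dist_add_le_two_sub (E : Type*) [SeminormedAddCommGroup E]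
    [NormedSpace ℝ E] [UniformConvexSpace E] {ε : ℝ} (hε : 0 < ε) :
    ∃ δ, 0 < δ ∧ ∀ ⦃x : E⦄, ‖x‖ ≤ 1 + δ → ∀ ⦃y⦄, ‖y‖ ≤ 1 + δ → ε ≤ ‖x - y‖ →
      ‖x + y‖ ≤ 2 - δ := by
  obtain ⟨δ₀, hδ₀, h⟩ := exists_forall_closed_ball_dist_add_le_two_sub E (half_pos hε)
  set δ := min (δ₀ / 4) 1
  have hδ : 0 < δ := lt_min (by positivity) one_pos
  have hδ_le : δ ≤ δ₀ / 4 := min_le_left _ _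
  have hδ_le_one : δ ≤ 1 := min_le_right _ _
  refine ⟨δ, hδ, fun x hx y hy hxy => ?_⟩
  have hr : 0 < 1 + δ := by positivity
  have norm_scale (z : E) : ‖(1 + δ)⁻¹ • z‖ = ‖z‖ / (1 + δ) := by
    rw [norm_smul_of_nonneg (inv_nonneg.2 hr.le), inv_mul_eq_div]
  have hsum : ‖x + y‖ / (1 + δ) ≤ 2 - δ₀ := by
    rw [← norm_scale, smul_add]
    refine h ?_ ?_ ?_
    · rwa [norm_scale, div_le_one hr]
    · rwa [norm_scale, div_le_one hr]
    · rw [← smul_sub, norm_scale, le_div_iff₀ hr]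
      nlinarith
  calc ‖x + y‖ ≤ (2 - δ₀) * (1 + δ) := (div_le_iff₀ hr).1 hsum
    _ ≤ 2 - δ := by nlinarith

instance QuotientAddGroup.instUniformConvexSpace {M : Type*} [SeminormedAddCommGroup M]
    [NormedSpace ℝ M] [UniformConvexSpace M] (S : AddSubgroup M) :
    UniformConvexSpace (M ⧸ S) where
  uniform_convex ε hε := by
    obtain ⟨δ, hδ, h⟩ := exists_forall_norm_le_one_add_dist_add_le_two_sub M hε
    refine ⟨δ, hδ, fun u hu v hv huv => ?_⟩
    obtain ⟨x, rfl, hx⟩ := exists_norm_mk_lt u hδ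
    obtain ⟨y, rfl, hy⟩ := exists_norm_mk_lt v hδ
    rw [← QuotientAddGroup.mk_sub] at huv
    rw [← QuotientAddGroup.mk_add]
    exact norm_mk_le_norm.trans (h (by linarith) (by linarith) (huv.trans norm_mk_le_norm))

theorem quotient_of_uniformConvex_is_uniformConvex_banach_general
    {E : Type*} [NormedAddCommGroup E] [NormedSpace ℝ E] [CompleteSpace E]
    [UniformConvexSpace E] (F : Submodule ℝ E) :
    UniformConvexSpace (E ⧸ F) ∧ CompleteSpace (E ⧸ F) :=
  ⟨inferInstanceAs (UniformConvexSpace (E ⧸ F.toAddSubgroup)), inferInstance⟩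

/-- The quotient of a uniformly convex Banach space by a closed
linear subspace, equipped with the quotient norm, is a uniformly convex Banach space. -/
theorem quotient_of_uniformConvex_is_uniformConvex_banach
    {E : Type*} [NormedAddCommGroup E] [NormedSpace ℝ E] [CompleteSpace E]
    [UniformConvexSpace E] (F : Submodule ℝ E) [IsClosed (F : Set E)] :
    UniformConvexSpace (E ⧸ F) ∧ CompleteSpace (E ⧸ F) :=
  quotient_of_uniformConvex_is_uniformConvex_banach_general F
end

section
/- Let 1 < p < ∞ and let μ be a measure on a measurable space. Then the Lebesgue space L^p(μ; ℂ) is a uniformly convex Banach space. -/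
/-!
The pointwise parallelogram-type inequality `‖a + b‖ ^ r ≤ 2 ^ (r - 1) * (‖a‖ ^ r + ‖b‖ ^ r)`
is strict for `a ≠ b` in a strictly convex space, so by compactness of the `ℓ^r`-unit sphere of
`E × E` it holds with a uniform gap once `‖a - b‖ ^ r` is bounded below there. Homogeneity turns
this gap into an inequality `c ‖a - b‖ ^ r + ‖a + b‖ ^ r ≤ (2 ^ (r - 1) + c η) (‖a‖ ^ r + ‖b‖ ^ r)`
valid for all `a, b`, which integrates to the same inequality in `L^p`; for unit vectors at
distance at least `ε` it bounds `‖x + y‖ ^ r` away from `2 ^ r`.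
-/

open MeasureTheory ENNReal

theorem Real.rpow_add_lt_mul_rpow_add_rpow {r x y : ℝ} (hr : 1 < r) (hx : 0 ≤ x) (hy : 0 ≤ y)
    (hxy : x ≠ y) : (x + y) ^ r < 2 ^ (r - 1) * (x ^ r + y ^ r) := by
  have h := (strictConvexOn_rpow hr).2 hx hy hxy (by norm_num : (0 : ℝ) < 2⁻¹)
    (by norm_num : (0 : ℝ) < 2⁻¹) (by norm_num)
  simp only [smul_eq_mul, ← mul_add] at h
  rw [Real.mul_rpow (by norm_num) (by positivity), Real.inv_rpow (by norm_num)] at h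
  rw [inv_mul_lt_iff₀ (by positivity)] at h
  rw [Real.rpow_sub_one two_ne_zero]
  linarith

theorem Real.exists_pos_le_sub_of_rpow_le_rpow_sub {r a s : ℝ} (hr : 0 < r) (ha : 0 < a)
    (hs : 0 < s) : ∃ δ > 0, ∀ t, 0 ≤ t → t ^ r ≤ a ^ r - s → t ≤ a - δ := by
  set u := max (a ^ r - s) 0
  have hu : u ^ r⁻¹ < a := by
    calc u ^ r⁻¹ < (a ^ r) ^ r⁻¹ :=
          Real.rpow_lt_rpow (le_max_right _ _) (max_lt (by linarith) (by positivity))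
            (inv_pos.2 hr)
      _ = a := Real.rpow_rpow_inv ha.le hr.ne'
  refine ⟨a - u ^ r⁻¹, by linarith, fun t ht htr => ?_⟩
  calc t = (t ^ r) ^ r⁻¹ := (Real.rpow_rpow_inv ht hr.ne').symm
    _ ≤ u ^ r⁻¹ :=
        Real.rpow_le_rpow (Real.rpow_nonneg ht r) (le_max_of_le_left htr) (inv_nonneg.2 hr.le)
    _ = a - (a - u ^ r⁻¹) := by ring

section NormRpow

variable {E : Type*} {r : ℝ}

theorem norm_add_rpow_le [SeminormedAddCommGroup E] (hr : 1 ≤ r) (a b : E) :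
    ‖a + b‖ ^ r ≤ 2 ^ (r - 1) * (‖a‖ ^ r + ‖b‖ ^ r) := by
  calc ‖a + b‖ ^ r ≤ (‖a‖ + ‖b‖) ^ r :=
        Real.rpow_le_rpow (norm_nonneg _) (norm_add_le a b) (by linarith)
    _ ≤ 2 ^ (r - 1) * (‖a‖ ^ r + ‖b‖ ^ r) := by
        exact_mod_cast NNReal.rpow_add_le_mul_rpow_add_rpow ‖a‖₊ ‖b‖₊ hr

variable [NormedAddCommGroup E] [NormedSpace ℝ E]

theorem norm_add_rpow_lt [StrictConvexSpace ℝ E] (hr : 1 < r) {a b : E} (hab : a ≠ b) :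
    ‖a + b‖ ^ r < 2 ^ (r - 1) * (‖a‖ ^ r + ‖b‖ ^ r) := by
  rcases eq_or_ne ‖a‖ ‖b‖ with h | h
  · have hlt : ‖a + b‖ < ‖a‖ + ‖b‖ :=
      (norm_add_le a b).lt_of_ne fun h' => hab (eq_of_norm_eq_of_norm_add_eq h h')
    calc ‖a + b‖ ^ r < (‖a‖ + ‖b‖) ^ r :=
          Real.rpow_lt_rpow (norm_nonneg _) hlt (by linarith)
      _ = 2 ^ (r - 1) * (‖a‖ ^ r + ‖b‖ ^ r) := by
          rw [← h, ← two_mul, Real.mul_rpow (by norm_num) (norm_nonneg _),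
            Real.rpow_sub_one two_ne_zero]
          ring
  · calc ‖a + b‖ ^ r ≤ (‖a‖ + ‖b‖) ^ r :=
          Real.rpow_le_rpow (norm_nonneg _) (norm_add_le a b) (by linarith)
      _ < 2 ^ (r - 1) * (‖a‖ ^ r + ‖b‖ ^ r) :=
          Real.rpow_add_lt_mul_rpow_add_rpow hr (norm_nonneg a) (norm_nonneg b) h

theorem exists_pos_norm_add_rpow_add_le_of_rpow_add_rpow_eq_one [StrictConvexSpace ℝ E]
    [ProperSpace E] (hr : 1 < r) {η : ℝ} (hη : 0 < η) :
    ∃ c > 0, ∀ a b : E, ‖a‖ ^ r + ‖b‖ ^ r = 1 → η ≤ ‖a - b‖ ^ r →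
      ‖a + b‖ ^ r + c ≤ 2 ^ (r - 1) := by
  have hr0 : 0 < r := by linarith
  have hr0' : 0 ≤ r := hr0.le
  set K : Set (E × E) := {z | ‖z.1‖ ^ r + ‖z.2‖ ^ r = 1} ∩ {z | η ≤ ‖z.1 - z.2‖ ^ r}
  have hle_one : ∀ {s t : ℝ}, 0 ≤ s → 0 ≤ t → s ^ r + t ^ r = 1 → s ≤ 1 := fun hs ht hst =>
    (Real.rpow_le_rpow_iff hs zero_le_one hr0).1 <| by
      rw [Real.one_rpow]; linarith [Real.rpow_nonneg ht r]
  have hK : IsCompact K := by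
    refine (isCompact_closedBall (0 : E × E) 1).of_isClosed_subset ?_ ?_
    · refine (isClosed_eq ?_ continuous_const).inter (isClosed_le continuous_const ?_) <;>
        fun_prop (disch := assumption)
    · rintro ⟨a, b⟩ ⟨hab, -⟩
      simp only [Metric.mem_closedBall, dist_zero_right, Prod.norm_def]
      exact max_le (hle_one (norm_nonneg a) (norm_nonneg b) hab)
        (hle_one (norm_nonneg b) (norm_nonneg a) ((add_comm _ _).trans hab))
  have hgap : ∀ z ∈ K, 0 < 2 ^ (r - 1) - ‖z.1 + z.2‖ ^ r := by
    rintro ⟨a, b⟩ ⟨hab : ‖a‖ ^ r + ‖b‖ ^ r = 1, hη_le : η ≤ ‖a - b‖ ^ r⟩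
    have hne : a ≠ b := by
      rintro rfl
      rw [sub_self, norm_zero, Real.zero_rpow hr0.ne'] at hη_le
      linarith
    have := norm_add_rpow_lt hr hne
    rw [hab, mul_one] at this
    linarith
  obtain ⟨c, hc, hcK⟩ :=
    hK.exists_forall_le' (Continuous.continuousOn (by fun_prop (disch := assumption))) hgap
  exact ⟨c, hc, fun a b h₁ h₂ => by linarith [hcK (a, b) ⟨h₁, h₂⟩]⟩

theorem exists_pos_norm_add_rpow_add_mul_le [StrictConvexSpace ℝ E] [ProperSpace E]
    (hr : 1 < r) {η : ℝ} (hη : 0 < η) :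
    ∃ c > 0, ∀ a b : E, η * (‖a‖ ^ r + ‖b‖ ^ r) ≤ ‖a - b‖ ^ r →
      ‖a + b‖ ^ r + c * (‖a‖ ^ r + ‖b‖ ^ r) ≤ 2 ^ (r - 1) * (‖a‖ ^ r + ‖b‖ ^ r) := by
  obtain ⟨c, hc, hsphere⟩ := exists_pos_norm_add_rpow_add_le_of_rpow_add_rpow_eq_one (E := E) hr hη
  refine ⟨c, hc, fun a b hab => ?_⟩
  set S := ‖a‖ ^ r + ‖b‖ ^ r
  rcases (show 0 ≤ S by positivity).eq_or_lt with hS | hS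
  · have hadd : ‖a + b‖ ^ r ≤ 2 ^ (r - 1) * S := norm_add_rpow_le hr.le a b
    rw [← hS] at hadd ⊢
    linarith
  set t := S ^ (-r⁻¹)
  have hscale : ∀ v : E, ‖t • v‖ ^ r = S⁻¹ * ‖v‖ ^ r := fun v => by
    have ht : t ^ r = S⁻¹ := by
      rw [← Real.rpow_mul hS.le, neg_mul, inv_mul_cancel₀ (by linarith), Real.rpow_neg_one]
    rw [norm_smul, Real.norm_of_nonneg (by positivity), Real.mul_rpow (by positivity)
      (norm_nonneg _), ht]
  have h := hsphere (t • a) (t • b) (by rw [hscale, hscale, ← mul_add, inv_mul_cancel₀ hS.ne'])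
    (by rw [← smul_sub, hscale, inv_mul_eq_div, le_div_iff₀ hS]; linarith)
  rw [← smul_add, hscale, inv_mul_eq_div, div_add' _ _ _ hS.ne', div_le_iff₀ hS] at h
  linarith

theorem exists_pos_mul_norm_sub_rpow_add_norm_add_rpow_le [StrictConvexSpace ℝ E] [ProperSpace E]
    (hr : 1 < r) {η : ℝ} (hη : 0 < η) :
    ∃ c > 0, ∀ a b : E, c * ‖a - b‖ ^ r + ‖a + b‖ ^ r ≤
      (2 ^ (r - 1) + c * η) * (‖a‖ ^ r + ‖b‖ ^ r) := by
  obtain ⟨c, hc, hgap⟩ := exists_pos_norm_add_rpow_add_mul_le (E := E) hr hη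
  have h2 : (0 : ℝ) < 2 ^ (r - 1) := by positivity
  refine ⟨c / 2 ^ (r - 1), by positivity, fun a b => ?_⟩
  have hS : 0 ≤ ‖a‖ ^ r + ‖b‖ ^ r := by positivity
  have hc' : 0 ≤ c / 2 ^ (r - 1) := by positivity
  have hadd := norm_add_rpow_le hr.le a b
  by_cases hab : η * (‖a‖ ^ r + ‖b‖ ^ r) ≤ ‖a - b‖ ^ r
  · have hsub : ‖a - b‖ ^ r ≤ 2 ^ (r - 1) * (‖a‖ ^ r + ‖b‖ ^ r) := by
      simpa [sub_eq_add_neg] using norm_add_rpow_le hr.le a (-b)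
    have hsub' : c / 2 ^ (r - 1) * ‖a - b‖ ^ r ≤ c * (‖a‖ ^ r + ‖b‖ ^ r) := by
      rw [div_mul_eq_mul_div, div_le_iff₀ h2]
      nlinarith
    linarith [hgap a b hab, mul_nonneg (mul_nonneg hc' hη.le) hS]
  · linarith [mul_le_mul_of_nonneg_left (not_le.1 hab).le hc']

end NormRpow

namespace MeasureTheory.Lp

variable {α E : Type*} [MeasurableSpace α] {μ : Measure α} [NormedAddCommGroup E] {p : ℝ≥0∞}

theorem norm_rpow_toReal_eq_integral (hp0 : p ≠ 0) (hpt : p ≠ ∞) (f : Lp E p μ) :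
    ‖f‖ ^ p.toReal = ∫ x, ‖f x‖ ^ p.toReal ∂μ := by
  rw [norm_def, toReal_eLpNorm (Lp.aestronglyMeasurable f),
    lpNorm_eq_integral_norm_rpow_toReal hp0 hpt (Lp.aestronglyMeasurable f),
    Real.rpow_inv_rpow (integral_nonneg fun _ => by positivity) (toReal_ne_zero.2 ⟨hp0, hpt⟩)]

theorem mul_norm_sub_rpow_add_norm_add_rpow_le (hp0 : p ≠ 0) (hpt : p ≠ ∞) {c K : ℝ}
    (h : ∀ a b : E, c * ‖a - b‖ ^ p.toReal + ‖a + b‖ ^ p.toReal ≤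
      K * (‖a‖ ^ p.toReal + ‖b‖ ^ p.toReal)) (f g : Lp E p μ) :
    c * ‖f - g‖ ^ p.toReal + ‖f + g‖ ^ p.toReal ≤ K * (‖f‖ ^ p.toReal + ‖g‖ ^ p.toReal) := by
  have hint : ∀ u : Lp E p μ, Integrable (fun x => ‖u x‖ ^ p.toReal) μ := fun u =>
    (Lp.memLp u).integrable_norm_rpow hp0 hpt
  simp only [norm_rpow_toReal_eq_integral hp0 hpt]
  rw [← integral_const_mul, ← integral_add ((hint _).const_mul _) (hint _),
    ← integral_add (hint _) (hint _), ← integral_const_mul]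
  refine integral_mono_ae (((hint _).const_mul _).add (hint _))
    (((hint _).add (hint _)).const_mul _) ?_
  filter_upwards [coeFn_sub f g, coeFn_add f g] with x hsub hadd
  simpa only [hsub, hadd, Pi.sub_apply, Pi.add_apply] using h (f x) (g x)

theorem uniformConvexSpace [NormedSpace ℝ E] [StrictConvexSpace ℝ E] [ProperSpace E]
    [Fact (1 ≤ p)] (hp : 1 < p) (hpt : p ≠ ∞) : UniformConvexSpace (Lp E p μ) := by
  set r := p.toReal
  have hr : 1 < r := by simpa using (toReal_lt_toReal one_ne_top hpt).2 hp
  have hr0 : 0 < r := by linarith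
  refine ⟨fun ε hε => ?_⟩
  obtain ⟨c, hc, hpoint⟩ :=
    exists_pos_mul_norm_sub_rpow_add_norm_add_rpow_le (E := E) hr (η := ε ^ r / 4) (by positivity)
  obtain ⟨δ, hδ, hroot⟩ :=
    Real.exists_pos_le_sub_of_rpow_le_rpow_sub hr0 two_pos (s := c * ε ^ r / 2) (by positivity)
  refine ⟨δ, hδ, fun x hx y hy hxy => hroot _ (norm_nonneg _) ?_⟩
  have h := mul_norm_sub_rpow_add_norm_add_rpow_le (zero_lt_one.trans hp).ne' hpt hpoint x y
  rw [hx, hy, Real.one_rpow] at h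
  have hε : c * ε ^ r ≤ c * ‖x - y‖ ^ r :=
    mul_le_mul_of_nonneg_left (Real.rpow_le_rpow hε.le hxy hr0.le) hc.le
  rw [Real.rpow_sub_one two_ne_zero] at h
  linarith

end MeasureTheory.Lp

/-- For `1 < p < ∞`, the Lebesgue space `L^p(μ; ℂ)` is a uniformly
convex Banach space. -/
theorem Lp_uniformConvex_banach
    {α : Type*} [MeasurableSpace α] (μ : Measure α) (p : ℝ≥0∞) [Fact (1 ≤ p)]
    (hp : 1 < p) (hp' : p < ∞) :
    UniformConvexSpace (Lp ℂ p μ) ∧ CompleteSpace (Lp ℂ p μ) :=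
  ⟨Lp.uniformConvexSpace hp hp'.ne, inferInstance⟩
end

section
/- Every uniformly convex Banach space is reflexive, i.e. the canonical embedding of E into its bidual E** is surjective (Milman–Pettis theorem). -/
/-!
Helly's lemma, a finite-dimensional Hahn–Banach separation, says that a functional `F` on `E*`
is matched on any finitely many functionals by vectors of norm barely above `‖F‖`. Fix `f` in
the unit ball of `E*` with `F f` close to `‖F‖`. Any two such vectors that also nearly match `F`
at `f` have `f (x + y)` close to `2 ‖F‖`, so by uniform convexity they are within `ε ‖F‖` of
each other. Matching `F` at `f` and at an arbitrary `g` then shows `‖κ x₀ - F‖ ≤ ε ‖F‖`, so `F`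
lies in the closure of `κ(E)`, which is closed because `κ` is an isometry and `E` is complete.
-/

open Metric NormedSpace Set

theorem ContinuousLinearMap.apply_comp_pi {𝕜 E ι : Type*} [NontriviallyNormedField 𝕜]
    [SeminormedAddCommGroup E] [NormedSpace 𝕜 E] [Fintype ι]
    (F : StrongDual 𝕜 (StrongDual 𝕜 E)) (f : ι → StrongDual 𝕜 E) (φ : StrongDual 𝕜 (ι → 𝕜)) :
    F (φ.comp (ContinuousLinearMap.pi f)) = φ fun i => F (f i) := by
  classical
  have hφ : ∀ v : ι → 𝕜, φ v = ∑ i, v i * φ fun j => if i = j then 1 else 0 := fun v => by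
    simpa using (φ : (ι → 𝕜) →ₗ[𝕜] 𝕜).pi_apply_eq_sum_univ v
  have hcomp : φ.comp (ContinuousLinearMap.pi f) =
      ∑ i, (φ fun j => if i = j then 1 else 0) • f i := by
    ext x
    rw [ContinuousLinearMap.comp_apply, hφ]
    simp [mul_comm]
  rw [hcomp, map_sum, hφ]
  simp [mul_comm]

theorem ContinuousLinearMap.exists_norm_le_one_lt_apply {E : Type*} [NormedAddCommGroup E]
    [NormedSpace ℝ E] (g : StrongDual ℝ E) {c : ℝ} (hc : c < ‖g‖) :
    ∃ x : E, ‖x‖ ≤ 1 ∧ c < g x := by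
  obtain ⟨x, hx, hgx⟩ := g.exists_lt_apply_of_lt_opNorm hc
  rcases abs_cases (g x) with ⟨habs, -⟩ | ⟨habs, -⟩
  · exact ⟨x, hx.le, by rwa [Real.norm_eq_abs, habs] at hgx⟩
  · exact ⟨-x, by simpa using hx.le, by rwa [Real.norm_eq_abs, habs, ← map_neg] at hgx⟩

section

variable {E : Type*} [SeminormedAddCommGroup E] [NormedSpace ℝ E]

theorem ContinuousLinearMap.norm_le_div_of_forall_closedBall_lt {g : StrongDual ℝ E} {r u : ℝ}
    (hr : 0 < r) (h : ∀ x ∈ closedBall (0 : E) r, g x < u) : ‖g‖ ≤ u / r := by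
  have hu : 0 < u := by simpa using h 0 (mem_closedBall_self hr.le)
  refine opNorm_le_of_unit_norm (div_nonneg hu.le hr.le) fun x hx => ?_
  have h₁ := h (r • x) (by simp [norm_smul, hx, abs_of_pos hr])
  have h₂ := h (-(r • x)) (by simp [norm_smul, hx, abs_of_pos hr])
  rw [map_smul, smul_eq_mul] at h₁
  rw [map_neg, map_smul, smul_eq_mul] at h₂
  have h₃ : |r * g x| < u := abs_lt.2 ⟨by linarith, h₁⟩
  rw [abs_mul, abs_of_pos hr] at h₃
  rw [Real.norm_eq_abs, le_div_iff₀ hr]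
  linarith

theorem mem_closure_image_pi_closedBall {ι : Type*} [Fintype ι]
    (F : StrongDual ℝ (StrongDual ℝ E)) (f : ι → StrongDual ℝ E) {r : ℝ} (hr : ‖F‖ < r) :
    (fun i => F (f i)) ∈ closure (ContinuousLinearMap.pi f '' closedBall 0 r) := by
  by_contra hF
  obtain ⟨φ, u, hφ, hφF⟩ := geometric_hahn_banach_closed_point
    ((convex_closedBall (0 : E) r).linear_image (ContinuousLinearMap.pi f : E →ₗ[ℝ] ι → ℝ)).closure
    isClosed_closure hF
  have hr₀ : 0 < r := (norm_nonneg F).trans_lt hr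
  have hu : 0 < u := by
    simpa using hφ 0 (subset_closure ⟨0, mem_closedBall_self hr₀.le, map_zero _⟩)
  have hnorm : ‖φ.comp (ContinuousLinearMap.pi f)‖ ≤ u / r :=
    ContinuousLinearMap.norm_le_div_of_forall_closedBall_lt hr₀ fun x hx =>
      hφ _ (subset_closure ⟨x, hx, rfl⟩)
  rw [← ContinuousLinearMap.apply_comp_pi] at hφF
  refine lt_irrefl u <| calc
    u < F (φ.comp (ContinuousLinearMap.pi f)) := hφF
    _ ≤ ‖F‖ * ‖φ.comp (ContinuousLinearMap.pi f)‖ := (le_abs_self _).trans (F.le_opNorm _)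
    _ ≤ ‖F‖ * (u / r) := by gcongr
    _ < r * (u / r) := by gcongr
    _ = u := mul_div_cancel₀ u hr₀.ne'

theorem exists_norm_le_forall_abs_apply_sub_lt {ι : Type*} [Fintype ι]
    (F : StrongDual ℝ (StrongDual ℝ E)) (f : ι → StrongDual ℝ E) {ε : ℝ} (hε : 0 < ε) :
    ∃ x : E, ‖x‖ ≤ ‖F‖ + ε ∧ ∀ i, |f i x - F (f i)| < ε := by
  obtain ⟨_, ⟨x, hx, rfl⟩, hdist⟩ := Metric.mem_closure_iff.1
    (mem_closure_image_pi_closedBall F f (lt_add_of_pos_right _ hε)) ε hε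
  refine ⟨x, by simpa using hx, fun i => ?_⟩
  rw [← Real.dist_eq, dist_comm]
  exact (dist_le_pi_dist _ _ i).trans_lt hdist

theorem exists_forall_norm_le_one_add_mul_norm_add_lt [UniformConvexSpace E] {ε : ℝ}
    (hε : 0 < ε) :
    ∃ η > 0, ∀ ⦃r : ℝ⦄, 0 < r → ∀ ⦃x : E⦄, ‖x‖ ≤ (1 + η) * r → ∀ ⦃y⦄, ‖y‖ ≤ (1 + η) * r →
      ε * r ≤ ‖x - y‖ → ‖x + y‖ < (2 - η) * r := by
  obtain ⟨δ, hδ, huc⟩ := exists_forall_closed_ball_dist_add_le_two_sub E (half_pos hε)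
  have hη : 0 < min 1 (δ / 4) := by positivity
  refine ⟨min 1 (δ / 4), hη, fun r hr x hx y hy hxy => ?_⟩
  set η := min 1 (δ / 4)
  have hη₁ : η ≤ 1 := min_le_left _ _
  have hηδ : η ≤ δ / 4 := min_le_right _ _
  have hR : 0 < (1 + η) * r := by positivity
  have hscale : ∀ z : E, ‖((1 + η) * r)⁻¹ • z‖ = ‖z‖ / ((1 + η) * r) := fun z => by
    rw [norm_smul, norm_inv, Real.norm_of_nonneg hR.le, inv_mul_eq_div]
  have h := huc (by rw [hscale]; exact div_le_one_of_le₀ hx hR.le)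
    (by rw [hscale]; exact div_le_one_of_le₀ hy hR.le)
    (by
      rw [← smul_sub, hscale, le_div_iff₀ hR]
      nlinarith [mul_nonneg (mul_pos hε hr).le (sub_nonneg.2 hη₁)])
  rw [← smul_add, hscale, div_le_iff₀ hR] at h
  nlinarith [mul_pos (mul_pos hδ hη) hr]

end

section

variable {E : Type*} [NormedAddCommGroup E] [NormedSpace ℝ E]

theorem norm_inclusionInDoubleDual_sub_le_of_forall_exists {F : StrongDual ℝ (StrongDual ℝ E)}
    {x₀ : E} {c : ℝ} (hc : 0 ≤ c)
    (h : ∀ g : StrongDual ℝ E, ∀ t > 0, ∃ y, ‖x₀ - y‖ ≤ c ∧ |g y - F g| < t) :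
    ‖inclusionInDoubleDual ℝ E x₀ - F‖ ≤ c := by
  refine ContinuousLinearMap.opNorm_le_bound _ hc fun g => ?_
  rw [sub_apply, dual_def, Real.norm_eq_abs]
  refine le_of_forall_pos_lt_add fun t ht => ?_
  obtain ⟨y, hy, hgy⟩ := h g t ht
  calc |g x₀ - F g| ≤ |g (x₀ - y)| + |g y - F g| := by
        rw [map_sub]; exact abs_sub_le _ _ _
    _ ≤ ‖g‖ * ‖x₀ - y‖ + |g y - F g| := by gcongr; exact g.le_opNorm _
    _ < ‖g‖ * c + t := add_lt_add_of_le_of_lt (by gcongr) hgy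
    _ = c * ‖g‖ + t := by ring

variable [UniformConvexSpace E]

theorem exists_norm_inclusionInDoubleDual_sub_le {F : StrongDual ℝ (StrongDual ℝ E)}
    (hF : F ≠ 0) {ε : ℝ} (hε : 0 < ε) :
    ∃ x : E, ‖inclusionInDoubleDual ℝ E x - F‖ ≤ ε * ‖F‖ := by
  obtain ⟨η, hη, huc⟩ := exists_forall_norm_le_one_add_mul_norm_add_lt (E := E) hε
  have hr : 0 < ‖F‖ := (norm_pos_iff (a := F)).2 hF
  have hηr : 0 < η / 4 * ‖F‖ := by positivity
  obtain ⟨f, hf, hFf⟩ := F.exists_norm_le_one_lt_apply (sub_lt_self _ hηr)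
  set S : Set E := {x | ‖x‖ ≤ (1 + η) * ‖F‖ ∧ F f - η / 4 * ‖F‖ < f x}
  -- On `S`, `f` is nearly as large as the norms allow, so uniform convexity makes `S` thin.
  have hS : ∀ x ∈ S, ∀ y ∈ S, ‖x - y‖ < ε * ‖F‖ := by
    rintro x ⟨hx, hfx⟩ y ⟨hy, hfy⟩
    by_contra! hxy
    have hsum : f (x + y) ≤ ‖x + y‖ :=
      (le_abs_self _).trans ((f.le_opNorm _).trans (mul_le_of_le_one_left (norm_nonneg _) hf))
    have := huc hr hx hy hxy
    rw [map_add] at hsum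
    linarith
  have happrox : ∀ g : StrongDual ℝ E, ∀ t > 0, ∃ y ∈ S, |g y - F g| < t := by
    intro g t ht
    obtain ⟨y, hy, hfg⟩ := exists_norm_le_forall_abs_apply_sub_lt F ![f, g] (lt_min hηr ht)
    have hfy := (abs_lt.1 (hfg 0)).1
    simp only [Matrix.cons_val_zero] at hfy
    have hmin := min_le_left (η / 4 * ‖F‖) t
    exact ⟨y, ⟨by linarith, by linarith⟩, (hfg 1).trans_le (min_le_right _ _)⟩
  obtain ⟨x₀, hx₀, -⟩ := happrox f 1 one_pos
  refine ⟨x₀, norm_inclusionInDoubleDual_sub_le_of_forall_exists (by positivity) fun g t ht => ?_⟩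
  obtain ⟨y, hy, hgy⟩ := happrox g t ht
  exact ⟨y, (hS x₀ hx₀ y hy).le, hgy⟩

theorem mem_closure_range_inclusionInDoubleDual (F : StrongDual ℝ (StrongDual ℝ E)) :
    F ∈ closure (range (inclusionInDoubleDual ℝ E)) := by
  rcases eq_or_ne F 0 with rfl | hF
  · exact subset_closure ⟨0, map_zero _⟩
  refine (Metric.mem_closure_iff (α := StrongDual ℝ (StrongDual ℝ E))).2 fun ε hε => ?_
  have hr : 0 < ‖F‖ := (norm_pos_iff (a := F)).2 hF
  obtain ⟨x, hx⟩ := exists_norm_inclusionInDoubleDual_sub_le hF (div_pos (half_pos hε) hr)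
  rw [div_mul_cancel₀ _ hr.ne'] at hx
  have hlt : ‖inclusionInDoubleDual ℝ E x - F‖ < ε := by linarith
  exact ⟨_, mem_range_self x, by
    rw [dist_comm]; exact (dist_eq_norm (inclusionInDoubleDual ℝ E x) F).trans_lt hlt⟩

end

/-- **Milman–Pettis**: Every uniformly convex Banach space is reflexive,
i.e. the canonical embedding of `E` into its bidual `E**` is surjective. -/
theorem milman_pettis
    {E : Type*} [NormedAddCommGroup E] [NormedSpace ℝ E] [CompleteSpace E]
    [UniformConvexSpace E] :
    Function.Surjective (NormedSpace.inclusionInDoubleDual ℝ E) := by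
  intro F
  have hclosed : IsClosed (range (inclusionInDoubleDual ℝ E)) :=
    (inclusionInDoubleDualLi (E := E) ℝ).isometry.isUniformInducing.isComplete_range.isClosed
  simpa [hclosed.closure_eq] using mem_closure_range_inclusionInDoubleDual F
end

section
/- Let E be a uniformly convex Banach space. Then the dual space E* is smooth: for every nonzero continuous linear functional f ∈ E* there exists a unique element Φ of the bidual E** with ‖Φ‖ = 1 and Φ(f) = ‖f‖. -/
/-!
A nonzero functional `f` on a uniformly convex space has the property that any two vectors of
the unit ball on which `f` is almost `‖f‖` are close. Hence maximizing sequences are Cauchy, so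
`f` attains its norm at a unique unit vector `x`. If `Φ` is a norming functional of `f` in the
bidual, then for `t > 0` and any `g`, `t Φ g ≤ ‖f + t g‖ - ‖f‖`, and near-maximizers `w` of
`f + t g` give `Φ g ≤ g w + t`. As `t → 0` these `w` maximize `f` in the limit, so `w → x` and
`Φ g ≤ g x`; applied to `±g` this shows `Φ` is evaluation at `x`.
-/

open Filter Topology NormedSpace

namespace StrongDual

variable {E : Type*} [NormedAddCommGroup E] [NormedSpace ℝ E]

lemma apply_le_norm (f : StrongDual ℝ E) {u : E} (hu : ‖u‖ ≤ 1) : f u ≤ ‖f‖ :=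
  (le_abs_self _).trans (f.unit_le_opNorm u hu)

lemma apply_le_norm_of_norm_le_one (f : StrongDual ℝ E) (hf : ‖f‖ ≤ 1) (u : E) : f u ≤ ‖u‖ := by
  simpa using (le_abs_self _).trans (f.le_of_opNorm_le hf u)

lemma exists_norm_le_one_lt_apply (f : StrongDual ℝ E) {c : ℝ} (hc : c < ‖f‖) :
    ∃ u : E, ‖u‖ ≤ 1 ∧ c < f u := by
  obtain ⟨u, hu, hcu⟩ := f.exists_lt_apply_of_lt_opNorm hc
  rcases le_or_gt 0 (f u) with h | h
  · exact ⟨u, hu.le, by simpa [abs_of_nonneg h] using hcu⟩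
  · exact ⟨-u, by simpa using hu.le, by simpa [abs_of_neg h] using hcu⟩

lemma exists_apply_le_apply_add_of_pos (f g : StrongDual ℝ E)
    (Φ : StrongDual ℝ (StrongDual ℝ E)) (hΦ : ‖Φ‖ ≤ 1) (hΦf : Φ f = ‖f‖) {t : ℝ} (ht : 0 < t) :
    ∃ w : E, ‖w‖ ≤ 1 ∧ ‖f‖ - t * (2 * ‖g‖ + t) ≤ f w ∧ Φ g ≤ g w + t := by
  obtain ⟨w, hw, hw_max⟩ := (f + t • g).exists_norm_le_one_lt_apply
    (sub_lt_self ‖f + t • g‖ (mul_pos ht ht))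
  replace hw_max : ‖f + t • g‖ - t * t < f w + t * g w := by simpa using hw_max
  have hΦfg : ‖f‖ + t * Φ g ≤ ‖f + t • g‖ := by
    simpa [hΦf] using Φ.apply_le_norm_of_norm_le_one hΦ (f + t • g)
  have hlower : ‖f‖ - t * ‖g‖ ≤ ‖f + t • g‖ := by
    have := norm_sub_norm_le f (-(t • g))
    rw [sub_neg_eq_add, norm_neg, norm_smul, Real.norm_of_nonneg ht.le] at this
    linarith
  have hfw := f.apply_le_norm hw
  have hgw : g w ≤ ‖g‖ := g.apply_le_norm hw
  refine ⟨w, hw, by nlinarith, ?_⟩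
  nlinarith

lemma exists_tendsto_apply_norm_forall_apply_le (f g : StrongDual ℝ E)
    (Φ : StrongDual ℝ (StrongDual ℝ E)) (hΦ : ‖Φ‖ ≤ 1) (hΦf : Φ f = ‖f‖) :
    ∃ w : ℕ → E, (∀ n, ‖w n‖ ≤ 1) ∧ Tendsto (fun n ↦ f (w n)) atTop (𝓝 ‖f‖) ∧
      ∀ n : ℕ, Φ g ≤ g (w n) + 1 / (n + 1) := by
  choose w hw hfw hΦg using fun n : ℕ ↦
    exists_apply_le_apply_add_of_pos f g Φ hΦ hΦf (Nat.one_div_pos_of_nat (n := n))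
  refine ⟨w, hw, ?_, hΦg⟩
  have hlower : Tendsto (fun n : ℕ ↦ ‖f‖ - 1 / (n + 1) * (2 * ‖g‖ + 1 / (n + 1))) atTop
      (𝓝 ‖f‖) := by
    have h := tendsto_one_div_add_atTop_nhds_zero_nat (𝕜 := ℝ)
    simpa using tendsto_const_nhds.sub (h.mul (tendsto_const_nhds.add h))
  exact tendsto_of_tendsto_of_tendsto_of_le_of_le hlower tendsto_const_nhds hfw
    fun n ↦ f.apply_le_norm (hw n)

variable [UniformConvexSpace E]

lemma exists_forall_norm_sub_le_of_apply_ge (f : StrongDual ℝ E) (hf : f ≠ 0) {ε : ℝ}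
    (hε : 0 < ε) : ∃ δ > 0, ∀ u v : E, ‖u‖ ≤ 1 → ‖v‖ ≤ 1 →
      ‖f‖ - δ ≤ f u → ‖f‖ - δ ≤ f v → ‖u - v‖ ≤ ε := by
  obtain ⟨δ, hδ, H⟩ := exists_forall_closed_ball_dist_add_le_two_sub E hε
  have hf_pos : 0 < ‖f‖ := norm_pos_iff.mpr hf
  refine ⟨δ * ‖f‖ / 4, by positivity, fun u v hu hv hfu hfv ↦ ?_⟩
  by_contra! huv
  have := calc f u + f v = f (u + v) := (map_add f u v).symm
    _ ≤ ‖f‖ * ‖u + v‖ := (le_abs_self _).trans (f.le_opNorm _)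
    _ ≤ ‖f‖ * (2 - δ) := by gcongr; exact H hu hv huv.le
  nlinarith

lemma cauchySeq_of_tendsto_apply_norm (f : StrongDual ℝ E) (hf : f ≠ 0) {u : ℕ → E}
    (hu : ∀ n, ‖u n‖ ≤ 1) (hfu : Tendsto (fun n ↦ f (u n)) atTop (𝓝 ‖f‖)) : CauchySeq u := by
  refine Metric.cauchySeq_iff'.mpr fun ε hε ↦ ?_
  obtain ⟨δ, hδ, H⟩ := f.exists_forall_norm_sub_le_of_apply_ge hf (half_pos hε)
  obtain ⟨N, hN⟩ := eventually_atTop.mp (hfu.eventually (Ici_mem_nhds (sub_lt_self _ hδ)))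
  refine ⟨N, fun n hn ↦ ?_⟩
  rw [dist_eq_norm]
  exact (H _ _ (hu n) (hu N) (hN n hn) (hN N le_rfl)).trans_lt (half_lt_self hε)

lemma tendsto_of_tendsto_apply_norm (f : StrongDual ℝ E) (hf : f ≠ 0) {u : ℕ → E}
    (hu : ∀ n, ‖u n‖ ≤ 1) (hfu : Tendsto (fun n ↦ f (u n)) atTop (𝓝 ‖f‖)) {x : E}
    (hx : ‖x‖ ≤ 1) (hfx : f x = ‖f‖) : Tendsto u atTop (𝓝 x) := by
  refine Metric.tendsto_atTop.mpr fun ε hε ↦ ?_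
  obtain ⟨δ, hδ, H⟩ := f.exists_forall_norm_sub_le_of_apply_ge hf (half_pos hε)
  obtain ⟨N, hN⟩ := eventually_atTop.mp (hfu.eventually (Ici_mem_nhds (sub_lt_self _ hδ)))
  refine ⟨N, fun n hn ↦ ?_⟩
  rw [dist_eq_norm]
  exact (H _ _ (hu n) hx (hN n hn) (by linarith)).trans_lt (half_lt_self hε)

lemma exists_norm_eq_one_apply_eq_norm [CompleteSpace E] (f : StrongDual ℝ E) (hf : f ≠ 0) :
    ∃ x : E, ‖x‖ = 1 ∧ f x = ‖f‖ := by
  -- a Hahn–Banach norming functional of `f` in the bidual supplies a maximizing sequence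
  obtain ⟨Φ, hΦ, hΦf⟩ := exists_dual_vector'' ℝ f
  obtain ⟨u, hu, hfu, -⟩ := exists_tendsto_apply_norm_forall_apply_le f 0 Φ hΦ hΦf
  obtain ⟨x, hux⟩ := cauchySeq_tendsto_of_complete (f.cauchySeq_of_tendsto_apply_norm hf hu hfu)
  have hx : ‖x‖ ≤ 1 := le_of_tendsto' (continuous_norm.tendsto x |>.comp hux) hu
  have hfx : f x = ‖f‖ := tendsto_nhds_unique ((f.continuous.tendsto x).comp hux) hfu
  refine ⟨x, le_antisymm hx ?_, hfx⟩
  have : ‖f‖ ≤ ‖f‖ * ‖x‖ := hfx.symm.le.trans ((le_abs_self _).trans (f.le_opNorm x))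
  exact (le_mul_iff_one_le_right (norm_pos_iff.mpr hf)).mp this

lemma apply_le_apply_of_apply_eq_norm (f : StrongDual ℝ E) (hf : f ≠ 0) {x : E}
    (hx : ‖x‖ ≤ 1) (hfx : f x = ‖f‖) (Φ : StrongDual ℝ (StrongDual ℝ E)) (hΦ : ‖Φ‖ ≤ 1)
    (hΦf : Φ f = ‖f‖) (g : StrongDual ℝ E) : Φ g ≤ g x := by
  obtain ⟨w, hw, hfw, hΦg⟩ := exists_tendsto_apply_norm_forall_apply_le f g Φ hΦ hΦf
  have hwx := f.tendsto_of_tendsto_apply_norm hf hw hfw hx hfx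
  have hlim : Tendsto (fun n : ℕ ↦ g (w n) + 1 / (n + 1)) atTop (𝓝 (g x)) := by
    simpa using ((g.continuous.tendsto x).comp hwx).add tendsto_one_div_add_atTop_nhds_zero_nat
  exact ge_of_tendsto' hlim hΦg

lemma eq_inclusionInDoubleDual_of_apply_eq_norm (f : StrongDual ℝ E) (hf : f ≠ 0) {x : E}
    (hx : ‖x‖ ≤ 1) (hfx : f x = ‖f‖) (Φ : StrongDual ℝ (StrongDual ℝ E)) (hΦ : ‖Φ‖ ≤ 1)
    (hΦf : Φ f = ‖f‖) : Φ = inclusionInDoubleDual ℝ E x := by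
  ext g
  refine le_antisymm (f.apply_le_apply_of_apply_eq_norm hf hx hfx Φ hΦ hΦf g) ?_
  simpa using f.apply_le_apply_of_apply_eq_norm hf hx hfx Φ hΦ hΦf (-g)

end StrongDual

/-- If `E` is a uniformly convex Banach space, then the dual space `E*`
is smooth: for every nonzero continuous linear functional `f ∈ E*` there exists a unique
element `Φ` of the bidual `E**` with `‖Φ‖ = 1` and `Φ f = ‖f‖`. -/
theorem dual_of_uniformConvex_is_smooth
    {E : Type*} [NormedAddCommGroup E] [NormedSpace ℝ E] [CompleteSpace E]
    [UniformConvexSpace E] :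
    ∀ f : StrongDual ℝ E, f ≠ 0 →
      ∃! Φ : StrongDual ℝ (StrongDual ℝ E), ‖Φ‖ = 1 ∧ Φ f = ‖f‖ := by
  intro f hf
  obtain ⟨x, hx, hfx⟩ := f.exists_norm_eq_one_apply_eq_norm hf
  refine ⟨inclusionInDoubleDual ℝ E x, ⟨?_, hfx⟩, fun Φ ⟨hΦ, hΦf⟩ ↦
    f.eq_inclusionInDoubleDual_of_apply_eq_norm hf hx.le hfx Φ hΦ.le hΦf⟩
  rw [← hx]
  exact (inclusionInDoubleDualLi ℝ).norm_map x
end
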